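/- Let π be a one-block factor code from a one-step SFT X onto a sofic shift Y. Then the class degree c_π is computable: c_π equals the minimum depth |M| over all transition blocks (W, n, M) with |W| ≤ |𝒜(Y)| · 2^{f² + f + 1}, where f = max_{w ∈ 𝒜(Y)} |π_b^{-1}(w)|. -/

import Mathlib

open List

/-- `U` is a (nonempty) block of the one-step SFT `X` determined by the
transition relation `TX`. -/
def IsXBlock {AX : Type*} (TX : AX → AX → Prop) (U : List AX) : Prop :=
  U ≠ [] ∧ U.Chain' TX

/-- The set of `X`-blocks mapping (symbol-wise, via `πb`) to the word `W`. -/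
def preim {AX AY : Type*} (TX : AX → AX → Prop) (πb : AX → AY) (W : List AY) :
    Set (List AX) :=
  {U | IsXBlock TX U ∧ U.map πb = W}

/-- `W` is a block of the sofic shift `Y = π(X)`. -/
def IsYBlock {AX AY : Type*} (TX : AX → AX → Prop) (πb : AX → AY) (W : List AY) : Prop :=
  (preim TX πb W).Nonempty

/-- `π_b^{-1}(W)_i`: the symbols occurring at position `i` in some preimage block of `W`. -/
def preimAt {AX AY : Type*} (TX : AX → AX → Prop) (πb : AX → AY) (W : List AY) (i : ℕ) :
    Set AX :=
  {a | ∃ U ∈ preim TX πb W, U[i]? = some a}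

/-- The `W`-pairing: the set of (first symbol, last symbol) pairs realized by
preimage blocks of `W`. -/
def pairing {AX AY : Type*} (TX : AX → AX → Prop) (πb : AX → AY) (W : List AY) :
    Set (AX × AX) :=
  {p | ∃ U ∈ preim TX πb W, U.head? = some p.1 ∧ U.getLast? = some p.2}

/-- `U ∈ π_b^{-1}(W)` is routable through `a` at time `n`. -/
def Routable {AX AY : Type*} (TX : AX → AX → Prop) (πb : AX → AY) (W : List AY) (n : ℕ)
    (a : AX) (U : List AX) : Prop :=
  ∃ U' ∈ preim TX πb W, U'.head? = U.head? ∧ U'[n]? = some a ∧ U'.getLast? = U.getLast?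

/-- `(W, n, M)` is a transition block. -/
def IsTransBlock {AX AY : Type*} (TX : AX → AX → Prop) (πb : AX → AY) (W : List AY)
    (n : ℕ) (M : Finset AX) : Prop :=
  IsYBlock TX πb W ∧ 0 < n ∧ n < W.length - 1 ∧
    (∀ a ∈ M, a ∈ preimAt TX πb W n) ∧
    ∀ U ∈ preim TX πb W, ∃ a ∈ M, Routable TX πb W n a U

/-- The fiber `π_b^{-1}(b)` of a `Y`-symbol. -/
def fiber {AX AY : Type*} [Fintype AX] [DecidableEq AY] (πb : AX → AY) (b : AY) :
    Finset AX :=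
  Finset.univ.filter (fun a => πb a = b)

/-- `f = max_{w ∈ 𝒜(Y)} |π_b^{-1}(w)|`. -/
def fMax {AX AY : Type*} [Fintype AX] [Fintype AY] [DecidableEq AY] (πb : AX → AY) : ℕ :=
  Finset.univ.sup (fun b : AY => (fiber πb b).card)

/-!
A transition block `(W, n, M)` only sees the two pairings `A` of `W[0..n]` and `B` of `W[n..]`
(the first/last symbol pairs of preimage blocks), because the pairing of a glued word
`P ++ a :: S` is the composition of the pairings of `P ++ [a]` and `a :: S`. In particular the
pairing of `V ++ Z` depends only on the pairing of `V` (once it is nonempty), so a word whose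
prefixes `W.take k` and `W.take l` have equal pairings can be cut to `W.take k ++ W.drop l`
without changing its pairing. A nonempty pairing of a word from `b₀` to `b` is a subset of
`π_b⁻¹(b₀) × π_b⁻¹(b)`, so prefixes realise at most `|𝒜(Y)| · 2 ^ f²` pairings, and by
pigeonhole both halves of a transition block can be shrunk to length `|𝒜(Y)| · 2 ^ f² + 1`.
The glued block keeps `M` and has length at most `2 |𝒜(Y)| 2 ^ f² + 1 ≤ |𝒜(Y)| 2 ^ (f² + f + 1)`.
-/

open SetRel

section Pairing

variable {AX AY : Type*} {TX : AX → AX → Prop} {πb : AX → AY}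

lemma length_eq_of_mem_preim {W : List AY} {U : List AX} (hU : U ∈ preim TX πb W) :
    U.length = W.length := by
  rw [← hU.2, List.length_map]

lemma mem_preim_append_cons_iff {P S : List AY} {a : AY} {U : List AX} :
    U ∈ preim TX πb (P ++ a :: S) ↔ ∃ V x V', U = V ++ x :: V' ∧
      V ++ [x] ∈ preim TX πb (P ++ [a]) ∧ x :: V' ∈ preim TX πb (a :: S) := by
  constructor
  · simp only [preim, IsXBlock, Set.mem_ofPred_eq, List.map_eq_append_iff, List.map_eq_cons_iff]
    rintro ⟨⟨-, hchain⟩, V, _, rfl, rfl, x, V', rfl, rfl, rfl⟩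
    exact ⟨V, x, V', rfl, ⟨⟨by simp, (List.isChain_split.1 hchain).1⟩, by simp⟩,
      ⟨⟨by simp, (List.isChain_split.1 hchain).2⟩, by simp⟩⟩
  · rintro ⟨V, x, V', rfl, ⟨⟨-, h₁⟩, hV⟩, ⟨⟨-, h₂⟩, hV'⟩⟩
    refine ⟨⟨by simp, List.isChain_split.2 ⟨h₁, h₂⟩⟩, ?_⟩
    simp only [List.map_append, List.map_cons, List.map_nil, List.cons.injEq] at hV hV' ⊢
    rw [(List.append_inj' hV rfl).1, hV'.1, hV'.2]

lemma exists_preim_append_cons_iff {P S : List AY} {a : AY} {p x q : AX} :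
    (∃ U ∈ preim TX πb (P ++ a :: S),
        U.head? = some p ∧ U[P.length]? = some x ∧ U.getLast? = some q) ↔
      (p, x) ∈ pairing TX πb (P ++ [a]) ∧ (x, q) ∈ pairing TX πb (a :: S) := by
  constructor
  · rintro ⟨U, hU, hp, hx, hq⟩
    obtain ⟨V, y, V', rfl, h₁, h₂⟩ := mem_preim_append_cons_iff.1 hU
    have hV : V.length = P.length := by simpa using length_eq_of_mem_preim h₁
    obtain rfl : y = x := by simpa [← hV] using hx
    exact ⟨⟨_, h₁, by simpa using hp, by simp⟩, ⟨_, h₂, rfl, by simpa using hq⟩⟩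
  · rintro ⟨⟨U₁, h₁, hp, hx⟩, ⟨U₂, h₂, hx', hq⟩⟩
    obtain ⟨V, rfl⟩ := List.getLast?_eq_some_iff.1 hx
    obtain ⟨V', rfl⟩ := List.head?_eq_some_iff.1 hx'
    have hV : V.length = P.length := by simpa using length_eq_of_mem_preim h₁
    exact ⟨V ++ x :: V', mem_preim_append_cons_iff.2 ⟨V, x, V', rfl, h₁, h₂⟩,
      by simpa using hp, by simp [← hV], by simpa using hq⟩

lemma pairing_append_cons (P S : List AY) (a : AY) :
    pairing TX πb (P ++ a :: S) = pairing TX πb (P ++ [a]) ○ pairing TX πb (a :: S) := by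
  ext ⟨p, q⟩
  constructor
  · rintro ⟨U, hU, hp, hq⟩
    have hP : P.length < U.length := by simp [length_eq_of_mem_preim hU]
    exact ⟨U[P.length], exists_preim_append_cons_iff.1
      ⟨U, hU, hp, List.getElem?_eq_getElem hP, hq⟩⟩
  · rintro ⟨x, h⟩
    obtain ⟨U, hU, hp, -, hq⟩ := exists_preim_append_cons_iff.2 h
    exact ⟨U, hU, hp, hq⟩

lemma exists_head?_getLast? {W : List AY} {U : List AX} (hU : U ∈ preim TX πb W) :
    ∃ p q, U.head? = some p ∧ U.getLast? = some q :=
  ⟨_, _, List.head?_eq_some_head hU.1.1, List.getLast?_eq_some_getLast hU.1.1⟩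

lemma pairing_nonempty_iff {W : List AY} : (pairing TX πb W).Nonempty ↔ IsYBlock TX πb W := by
  constructor
  · rintro ⟨-, U, hU, -⟩
    exact ⟨U, hU⟩
  · rintro ⟨U, hU⟩
    obtain ⟨p, q, hp, hq⟩ := exists_head?_getLast? hU
    exact ⟨(p, q), U, hU, hp, hq⟩

lemma head?_eq_and_getLast?_eq_of_mem_pairing {W : List AY} {p q : AX}
    (h : (p, q) ∈ pairing TX πb W) : W.head? = some (πb p) ∧ W.getLast? = some (πb q) := by
  obtain ⟨U, hU, hp, hq⟩ := h
  rw [← hU.2, List.head?_map, List.getLast?_map, hp, hq]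
  exact ⟨rfl, rfl⟩

lemma pairing_append_eq_of_pairing_eq {V V' : List AY} (Z : List AY)
    (h : pairing TX πb V = pairing TX πb V') (hne : (pairing TX πb V).Nonempty) :
    pairing TX πb (V ++ Z) = pairing TX πb (V' ++ Z) := by
  obtain ⟨⟨p, q⟩, hpq⟩ := hne
  obtain ⟨V₀, rfl⟩ := List.getLast?_eq_some_iff.1 (head?_eq_and_getLast?_eq_of_mem_pairing hpq).2
  obtain ⟨V₀', rfl⟩ :=
    List.getLast?_eq_some_iff.1 (head?_eq_and_getLast?_eq_of_mem_pairing (h ▸ hpq)).2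
  simp only [List.append_assoc, List.singleton_append]
  rw [pairing_append_cons V₀, pairing_append_cons V₀', h]

lemma mem_preimAt_append_cons_iff {P S : List AY} {a : AY} {x : AX} :
    x ∈ preimAt TX πb (P ++ a :: S) P.length ↔
      x ∈ SetRel.cod (pairing TX πb (P ++ [a])) ∧ x ∈ SetRel.dom (pairing TX πb (a :: S)) := by
  constructor
  · rintro ⟨U, hU, hx⟩
    obtain ⟨p, q, hp, hq⟩ := exists_head?_getLast? hU
    obtain ⟨hpx, hxq⟩ := exists_preim_append_cons_iff.1 ⟨U, hU, hp, hx, hq⟩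
    exact ⟨⟨p, hpx⟩, ⟨q, hxq⟩⟩
  · rintro ⟨⟨p, hpx⟩, ⟨q, hxq⟩⟩
    obtain ⟨U, hU, -, hx, -⟩ := exists_preim_append_cons_iff.2 ⟨hpx, hxq⟩
    exact ⟨U, hU, hx⟩

lemma IsYBlock.take {W : List AY} (h : IsYBlock TX πb W) {k : ℕ} (hk : 0 < k) :
    IsYBlock TX πb (W.take k) := by
  obtain ⟨U, ⟨hU, hchain⟩, rfl⟩ := h
  exact ⟨U.take k, ⟨by simp [hU, hk.ne'], hchain.take k⟩, List.map_take⟩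

end Pairing

/-- The transition-block condition at the cut point, in terms of the pairings `A` of the part up
to the cut and `B` of the part from the cut on. -/
def IsTransRel {AX : Type*} (A B : SetRel AX AX) (M : Finset AX) : Prop :=
  (A ○ B).Nonempty ∧ (∀ m ∈ M, m ∈ A.cod ∧ m ∈ B.dom) ∧
    ∀ p q, (p, q) ∈ A ○ B → ∃ m ∈ M, (p, m) ∈ A ∧ (m, q) ∈ B

section TransBlock

variable {AX AY : Type*} {TX : AX → AX → Prop} {πb : AX → AY}

lemma isTransBlock_append_cons_iff {P S : List AY} {a : AY} {M : Finset AX}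
    (hP : P ≠ []) (hS : S ≠ []) :
    IsTransBlock TX πb (P ++ a :: S) P.length M ↔
      IsTransRel (pairing TX πb (P ++ [a])) (pairing TX πb (a :: S)) M := by
  have hcut : 0 < P.length ∧ P.length < (P ++ a :: S).length - 1 := by
    simp [List.length_pos_iff, hP, List.length_pos_iff.2 hS]
  simp only [IsTransBlock, IsTransRel, ← pairing_append_cons, pairing_nonempty_iff, hcut,
    true_and, mem_preimAt_append_cons_iff]
  refine and_congr_right fun _ => and_congr_right fun _ => ⟨fun h => ?_, fun h => ?_⟩
  · rintro p q ⟨U, hU, hp, hq⟩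
    obtain ⟨m, hm, U', hU', hp', hm', hq'⟩ := h U hU
    exact ⟨m, hm, exists_preim_append_cons_iff.1 ⟨U', hU', hp'.trans hp, hm', hq'.trans hq⟩⟩
  · intro U hU
    obtain ⟨p, q, hp, hq⟩ := exists_head?_getLast? hU
    obtain ⟨m, hm, hpm, hmq⟩ := h p q ⟨U, hU, hp, hq⟩
    obtain ⟨U', hU', hp', hm', hq'⟩ := exists_preim_append_cons_iff.2 ⟨hpm, hmq⟩
    exact ⟨m, hm, U', hU', hp'.trans hp.symm, hm', hq'.trans hq.symm⟩

end TransBlock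

section Shortening

variable {AX AY : Type*} [Fintype AX] [Fintype AY] [DecidableEq AY]
  {TX : AX → AX → Prop} {πb : AX → AY}

lemma card_fiber_le_fMax (b : AY) : (fiber πb b).card ≤ fMax πb :=
  Finset.le_sup (f := fun b => (fiber πb b).card) (Finset.mem_univ b)

lemma exists_finset_pairing_mem (b₀ : AY) :
    ∃ K : Finset (Set (AX × AX)), K.card ≤ Fintype.card AY * 2 ^ (fMax πb ^ 2) ∧
      ∀ W : List AY, W.head? = some b₀ → pairing TX πb W ∈ K := by
  classical
  let rels (b : AY) : Finset (Set (AX × AX)) :=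
    Finset.image (fun s : Finset (AX × AX) => (s : Set (AX × AX)))
      (fiber πb b₀ ×ˢ fiber πb b).powerset
  refine ⟨Finset.univ.biUnion rels, ?_, ?_⟩
  · calc (Finset.univ.biUnion rels).card ≤ ∑ b, (rels b).card := Finset.card_biUnion_le
      _ ≤ ∑ _b : AY, 2 ^ (fMax πb ^ 2) := Finset.sum_le_sum fun b _ => ?_
      _ = Fintype.card AY * 2 ^ (fMax πb ^ 2) := by
          rw [Finset.sum_const, Finset.card_univ, smul_eq_mul]
    calc (rels b).card ≤ (fiber πb b₀ ×ˢ fiber πb b).powerset.card := Finset.card_image_le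
      _ = 2 ^ ((fiber πb b₀).card * (fiber πb b).card) := by
          rw [Finset.card_powerset, Finset.card_product]
      _ ≤ 2 ^ (fMax πb ^ 2) := by
          rw [sq]
          exact Nat.pow_le_pow_right two_pos
            (Nat.mul_le_mul (card_fiber_le_fMax _) (card_fiber_le_fMax _))
  · intro W hW
    obtain ⟨b, hb⟩ : ∃ b, W.getLast? = some b :=
      ⟨_, List.getLast?_eq_some_getLast (by rintro rfl; simp at hW)⟩
    have hsub : pairing TX πb W ⊆ ↑(fiber πb b₀ ×ˢ fiber πb b) := by
      rintro ⟨p, q⟩ hpq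
      obtain ⟨hp, hq⟩ := head?_eq_and_getLast?_eq_of_mem_pairing hpq
      simp_all [fiber]
    obtain ⟨s, hs⟩ := ((Finset.finite_toSet _).subset hsub).exists_finset_coe
    exact Finset.mem_biUnion.2 ⟨b, Finset.mem_univ _,
      Finset.mem_image.2 ⟨s, Finset.mem_powerset.2 (Finset.coe_subset.1 (hs ▸ hsub)), hs⟩⟩

lemma exists_pairing_eq_length_lt {W : List AY} (hne : (pairing TX πb W).Nonempty)
    (hlong : Fintype.card AY * 2 ^ (fMax πb ^ 2) + 1 < W.length) :
    ∃ W', pairing TX πb W' = pairing TX πb W ∧ 2 ≤ W'.length ∧ W'.length < W.length := by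
  obtain ⟨⟨p, q⟩, hpq⟩ := hne
  obtain ⟨K, hK, hmem⟩ := exists_finset_pairing_mem (TX := TX) (πb := πb) (πb p)
  obtain ⟨k, hk, l, hl, hkl, heq⟩ := Finset.exists_ne_map_eq_of_card_lt_of_maps_to
    (s := Finset.Icc 2 W.length) (t := K) (f := fun k => pairing TX πb (W.take k))
    (by rw [Nat.card_Icc]; omega) fun k hk => hmem _ <| by
      rw [List.head?_take, if_neg (by simp at hk; omega)]
      exact (head?_eq_and_getLast?_eq_of_mem_pairing hpq).1
  wlog hlt : k < l generalizing k l
  · exact this l hl k hk hkl.symm heq.symm (by omega)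
  simp only [Finset.mem_Icc] at hk hl
  have hne : (pairing TX πb (W.take k)).Nonempty :=
    pairing_nonempty_iff.2 ((pairing_nonempty_iff.1 ⟨_, hpq⟩).take (by omega))
  refine ⟨W.take k ++ W.drop l, ?_, by simp; omega, by simp; omega⟩
  rw [pairing_append_eq_of_pairing_eq _ heq hne, List.take_append_drop]

theorem exists_pairing_eq_length_le {W : List AY} (hne : (pairing TX πb W).Nonempty)
    (hW : 2 ≤ W.length) :
    ∃ W', pairing TX πb W' = pairing TX πb W ∧ 2 ≤ W'.length ∧
      W'.length ≤ Fintype.card AY * 2 ^ (fMax πb ^ 2) + 1 := by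
  by_cases hshort : W.length ≤ Fintype.card AY * 2 ^ (fMax πb ^ 2) + 1
  · exact ⟨W, rfl, hW, hshort⟩
  obtain ⟨W', h, hW', hlt⟩ := exists_pairing_eq_length_lt hne (by omega)
  obtain ⟨W'', h', hW'', hle⟩ := exists_pairing_eq_length_le (h ▸ hne) hW'
  exact ⟨W'', h'.trans h, hW'', hle⟩
termination_by W.length

theorem IsTransBlock.exists_length_le_two_mul_add_one {W : List AY} {n : ℕ} {M : Finset AX}
    (h : IsTransBlock TX πb W n M) :
    ∃ W' n', IsTransBlock TX πb W' n' M ∧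
      W'.length ≤ 2 * (Fintype.card AY * 2 ^ (fMax πb ^ 2)) + 1 := by
  have hn₀ := h.2.1
  have hn := h.2.2.1
  obtain ⟨P, a, S, rfl, rfl⟩ : ∃ P a S, W = P ++ a :: S ∧ P.length = n :=
    ⟨W.take n, W[n], W.drop (n + 1), by simp, by simp; omega⟩
  simp only [List.length_append, List.length_cons] at hn
  have hrel := (isTransBlock_append_cons_iff (List.ne_nil_of_length_pos hn₀)
    (List.ne_nil_of_length_pos (by omega))).1 h
  obtain ⟨⟨p, q⟩, x, hpx, hxq⟩ := hrel.1
  have hPa : 2 ≤ (P ++ [a]).length := by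
    simp only [List.length_append, List.length_singleton]; omega
  have haS : 2 ≤ (a :: S).length := by simp only [List.length_cons]; omega
  obtain ⟨P', hPP', hP'₂, hP'len⟩ := exists_pairing_eq_length_le ⟨_, hpx⟩ hPa
  obtain ⟨S', hSS', hS'₂, hS'len⟩ := exists_pairing_eq_length_le ⟨_, hxq⟩ haS
  have hx : a = πb x := by simpa using (head?_eq_and_getLast?_eq_of_mem_pairing hpx).2
  have hP'a : P'.getLast? = some a :=
    hx ▸ (head?_eq_and_getLast?_eq_of_mem_pairing (hPP' ▸ hpx)).2
  have hS'a : S'.head? = some a :=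
    hx ▸ (head?_eq_and_getLast?_eq_of_mem_pairing (hSS' ▸ hxq)).1
  obtain ⟨P₀, rfl⟩ := List.getLast?_eq_some_iff.1 hP'a
  obtain ⟨S₀, rfl⟩ := List.head?_eq_some_iff.1 hS'a
  simp only [List.length_append, List.length_cons, List.length_nil] at hP'₂ hS'₂ hP'len hS'len
  refine ⟨P₀ ++ a :: S₀, P₀.length, (isTransBlock_append_cons_iff
    (List.ne_nil_of_length_pos (by omega)) (List.ne_nil_of_length_pos (by omega))).2 ?_, ?_⟩
  · rwa [hPP', hSS']
  · simp only [List.length_append, List.length_cons]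
    omega

theorem IsTransBlock.exists_length_le_card_mul_two_pow {W : List AY} {n : ℕ} {M : Finset AX}
    (h : IsTransBlock TX πb W n M) :
    ∃ W' n', IsTransBlock TX πb W' n' M ∧
      W'.length ≤ Fintype.card AY * 2 ^ (fMax πb ^ 2 + fMax πb + 1) := by
  obtain ⟨W', n', h', hlen⟩ := h.exists_length_le_two_mul_add_one
  obtain ⟨U, hU⟩ := h.1
  obtain ⟨a, -⟩ := List.exists_mem_of_ne_nil U hU.1.1
  have hf : 1 ≤ fMax πb :=
    (Finset.card_pos.2 ⟨a, by simp [fiber]⟩ : 0 < (fiber πb (πb a)).card).trans_le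
      (card_fiber_le_fMax (πb a))
  have hK : 1 ≤ Fintype.card AY * 2 ^ (fMax πb ^ 2) :=
    Nat.mul_le_mul (Fintype.card_pos_iff.2 ⟨πb a⟩) Nat.one_le_two_pow
  have h4 : 2 ^ 2 ≤ 2 ^ (fMax πb + 1) := Nat.pow_le_pow_right two_pos (by omega)
  refine ⟨W', n', h', hlen.trans ?_⟩
  calc 2 * (Fintype.card AY * 2 ^ (fMax πb ^ 2)) + 1
      ≤ Fintype.card AY * 2 ^ (fMax πb ^ 2) * 2 ^ 2 := by omega
    _ ≤ Fintype.card AY * 2 ^ (fMax πb ^ 2) * 2 ^ (fMax πb + 1) := Nat.mul_le_mul_left _ h4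
    _ = Fintype.card AY * 2 ^ (fMax πb ^ 2 + fMax πb + 1) := by ring

end Shortening

theorem classDegree_computable_general {AX AY : Type*}
    [Fintype AX] [Fintype AY] [DecidableEq AY]
    (TX : AX → AX → Prop) (πb : AX → AY) :
    sInf {k | ∃ (W : List AY) (n : ℕ) (M : Finset AX),
        IsTransBlock TX πb W n M ∧ M.card = k} =
      sInf {k | ∃ (W : List AY) (n : ℕ) (M : Finset AX),
        IsTransBlock TX πb W n M ∧
        W.length ≤ Fintype.card AY * 2 ^ ((fMax πb) ^ 2 + fMax πb + 1) ∧
        M.card = k} := by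
  congr 1
  ext k
  constructor
  · rintro ⟨W, n, M, h, rfl⟩
    obtain ⟨W', n', h', hlen⟩ := h.exists_length_le_card_mul_two_pow
    exact ⟨W', n', M, h', hlen, rfl⟩
  · rintro ⟨W, n, M, h, -, rfl⟩
    exact ⟨W, n, M, h, rfl⟩

/-- The class degree `c_π = c*_π` (the minimal depth of a transition block)
equals the minimal depth over transition blocks `(W, n, M)` with
`|W| ≤ |𝒜(Y)| · 2 ^ (f² + f + 1)`; hence it is computable. -/
theorem classDegree_computable {AX AY : Type*}
    [Fintype AX] [Fintype AY] [DecidableEq AX] [DecidableEq AY] [Nonempty AX]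
    (TX : AX → AX → Prop) (πb : AX → AY)
    (hright : ∀ a : AX, ∃ b : AX, TX a b) (hleft : ∀ a : AX, ∃ b : AX, TX b a) :
    sInf {k | ∃ (W : List AY) (n : ℕ) (M : Finset AX),
        IsTransBlock TX πb W n M ∧ M.card = k} =
      sInf {k | ∃ (W : List AY) (n : ℕ) (M : Finset AX),
        IsTransBlock TX πb W n M ∧
        W.length ≤ Fintype.card AY * 2 ^ ((fMax πb) ^ 2 + fMax πb + 1) ∧
        M.card = k} :=
  classDegree_computable_general TX πb
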